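/- arXiv:2406.11741 — 2 statements merged into one kernel-verified Lean document; each statement's English description precedes it below -/
import Mathlib

section
/- Low-temperature transcendence criterion: with f̂ = f̄ the uniform mixture of experts f_1,...,f_k, if R(f̂_max) > max_i R(f_i) where f̂_max(·|x) is the uniform distribution on argmax_y f̂(y|x), then there exists τ ∈ (0,1) such that for all τ' with 0 < τ' ≤ τ, the tempered predictor f̂_{τ'}(·|x) = softmax(f̂(·|x); τ') satisfies R(f̂_{τ'}) > max_i R(f_i). -/
open Finset Filter

/-- Softmax with temperature `τ`. -/
noncomputable def softmax {Y : Type} [Fintype Y] (q : Y → ℝ) (τ : ℝ) (y : Y) : ℝ :=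
  Real.exp (q y / τ) / ∑ y', Real.exp (q y' / τ)

open scoped Classical in
/-- The uniform distribution over the maximizers of `q`. -/
noncomputable def argmaxDist {Y : Type} [Fintype Y] (q : Y → ℝ) (y : Y) : ℝ :=
  if y ∈ Finset.univ.filter (fun y₀ => ∀ y', q y' ≤ q y₀) then
    1 / (Finset.univ.filter (fun y₀ => ∀ y', q y' ≤ q y₀)).card
  else 0

/-- Expected reward of a conditional distribution `f` under test distribution `ptest`. -/
noncomputable def reward {X Y : Type} [Fintype X] [Fintype Y]
    (ptest : X → ℝ) (r : X → Y → ℝ) (f : X → Y → ℝ) : ℝ :=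
  ∑ x, ptest x * ∑ y, f x y * r x y

open Topology

/-!
As `τ → 0⁺`, `softmax q τ` tends pointwise to the uniform distribution on the maximizers of `q`:
after dividing numerator and denominator by `exp (max q / τ)`, every term `exp ((q y - max q) / τ)`
tends to `1` at a maximizer and to `0` elsewhere. The reward is a finite sum, linear in the predictor,
so it is continuous in it, and a strict inequality satisfied by the limit persists for all small `τ`.
-/

lemma tendsto_exp_div_nhdsGT_zero_of_neg {a : ℝ} (ha : a < 0) :
    Tendsto (fun τ => Real.exp (a / τ)) (𝓝[>] 0) (𝓝 0) := by
  have hdiv : Tendsto (fun τ : ℝ => a / τ) (𝓝[>] 0) atBot := by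
    simpa [div_eq_mul_inv] using (tendsto_const_mul_atBot_of_neg ha).mpr tendsto_inv_nhdsGT_zero
  exact Real.tendsto_exp_atBot.comp hdiv

section Softmax

variable {Y : Type} [Fintype Y]

lemma softmax_eq_exp_sub_div (q : Y → ℝ) (τ c : ℝ) (y : Y) :
    softmax q τ y = Real.exp ((q y - c) / τ) / ∑ y', Real.exp ((q y' - c) / τ) := by
  have hshift : ∀ y', Real.exp (q y' / τ) = Real.exp ((q y' - c) / τ) * Real.exp (c / τ) :=
    fun y' => by rw [← Real.exp_add, ← add_div, sub_add_cancel]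
  rw [softmax, hshift, sum_congr rfl fun y' _ => hshift y', ← sum_mul,
    mul_div_mul_right _ _ (Real.exp_pos _).ne']

lemma argmaxDist_eq_of_forall_le {q : Y → ℝ} {y₀ : Y} (hy₀ : ∀ y, q y ≤ q y₀) (y : Y) :
    argmaxDist q y =
      (if q y = q y₀ then 1 else 0) / ∑ y', (if q y' = q y₀ then (1 : ℝ) else 0) := by
  have hmax : ∀ z, (∀ y', q y' ≤ q z) ↔ q z = q y₀ :=
    fun z => ⟨fun hz => le_antisymm (hy₀ z) (hz y₀), fun hz y' => hz ▸ hy₀ y'⟩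
  classical
  simp only [argmaxDist, mem_filter, mem_univ, true_and, hmax, sum_boole]
  split_ifs <;> simp

lemma softmax_tendsto_argmaxDist (q : Y → ℝ) (y : Y) :
    Tendsto (fun τ => softmax q τ y) (𝓝[>] 0) (𝓝 (argmaxDist q y)) := by
  obtain ⟨y₀, -, hy₀'⟩ := exists_max_image univ q ⟨y, mem_univ y⟩
  have hy₀ : ∀ y', q y' ≤ q y₀ := fun y' => hy₀' y' (mem_univ _)
  have hterm : ∀ y', Tendsto (fun τ => Real.exp ((q y' - q y₀) / τ)) (𝓝[>] 0)
      (𝓝 (if q y' = q y₀ then 1 else 0)) := by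
    intro y'
    split_ifs with h
    · simp [h]
    · exact tendsto_exp_div_nhdsGT_zero_of_neg (sub_neg.mpr ((hy₀ y').lt_of_ne h))
  have hden : ∑ y', (if q y' = q y₀ then (1 : ℝ) else 0) ≠ 0 :=
    (sum_pos' (fun _ _ => by split_ifs <;> norm_num) ⟨y₀, mem_univ _, by simp⟩).ne'
  simp_rw [softmax_eq_exp_sub_div q _ (q y₀), argmaxDist_eq_of_forall_le hy₀]
  exact (hterm y).div (tendsto_finsetSum _ fun y' _ => hterm y') hden

end Softmax

lemma tendsto_reward {ι X Y : Type} [Fintype X] [Fintype Y] {l : Filter ι}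
    (ptest : X → ℝ) (r : X → Y → ℝ) {F : ι → X → Y → ℝ} {g : X → Y → ℝ}
    (hF : ∀ x y, Tendsto (fun i => F i x y) l (𝓝 (g x y))) :
    Tendsto (fun i => reward ptest r (F i)) l (𝓝 (reward ptest r g)) :=
  tendsto_finsetSum _ fun x _ => (tendsto_finsetSum _ fun y _ => (hF x y).mul_const _).const_mul _

theorem transcendence_of_argmax_reward_gt_general {X Y : Type}
    [Fintype X] [Fintype Y] {k : ℕ} (hk : 0 < k)
    (f : Fin k → X → Y → ℝ)
    (ptest : X → ℝ)
    (r : X → Y → ℝ)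
    (fhat : X → Y → ℝ)
    (hgt : reward ptest r (fun x => argmaxDist (fhat x))
      > Finset.univ.sup' ⟨⟨0, hk⟩, Finset.mem_univ _⟩ (fun i => reward ptest r (f i))) :
    ∃ τ : ℝ, τ ∈ Set.Ioo (0 : ℝ) 1 ∧ ∀ τ' : ℝ, 0 < τ' → τ' ≤ τ →
      reward ptest r (fun x => softmax (fhat x) τ')
        > Finset.univ.sup' ⟨⟨0, hk⟩, Finset.mem_univ _⟩ (fun i => reward ptest r (f i)) := by
  have hlim := tendsto_reward ptest r fun x y => softmax_tendsto_argmaxDist (fhat x) y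
  obtain ⟨b, hb, hsub⟩ :=
    mem_nhdsGT_iff_exists_Ioc_subset.mp (hlim.eventually (eventually_gt_nhds hgt))
  refine ⟨min b (1 / 2), ⟨lt_min hb one_half_pos, (min_le_right _ _).trans_lt one_half_lt_one⟩, ?_⟩
  exact fun τ' hτ' hle => hsub ⟨hτ', hle.trans (min_le_left _ _)⟩

/-- Low-temperature transcendence criterion: if the argmax predictor of the uniform mixture
`f̂` beats every expert, then there is a temperature `τ ∈ (0,1)` such that for every
`τ' ∈ (0, τ]` the tempered predictor `f̂_{τ'}` beats every expert. -/
theorem transcendence_of_argmax_reward_gt {X Y : Type}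
    [Fintype X] [Nonempty X] [Fintype Y] [Nonempty Y] {k : ℕ} (hk : 0 < k)
    (f : Fin k → X → Y → ℝ)
    (hf0 : ∀ i x y, 0 ≤ f i x y) (hf1 : ∀ i x, ∑ y, f i x y = 1)
    (ptest : X → ℝ) (hp0 : ∀ x, 0 ≤ ptest x) (hp1 : ∑ x, ptest x = 1)
    (r : X → Y → ℝ)
    (fhat : X → Y → ℝ) (hfhat : ∀ x y, fhat x y = (1 / (k : ℝ)) * ∑ i, f i x y)
    (hgt : reward ptest r (fun x => argmaxDist (fhat x))
      > Finset.univ.sup' ⟨⟨0, hk⟩, Finset.mem_univ _⟩ (fun i => reward ptest r (f i))) :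
    ∃ τ : ℝ, τ ∈ Set.Ioo (0 : ℝ) 1 ∧ ∀ τ' : ℝ, 0 < τ' → τ' ≤ τ →
      reward ptest r (fun x => softmax (fhat x) τ')
        > Finset.univ.sup' ⟨⟨0, hk⟩, Finset.mem_univ _⟩ (fun i => reward ptest r (f i)) :=
  transcendence_of_argmax_reward_gt_general hk f ptest r fhat hgt
end

section
/- Transcendence for a single noisy expert via low temperature: if the data is generated by the single noisy expert f_ρ(y|x) = ρ/|Y| + (1-ρ)f*(y|x) with ρ ∈ (0,1), where f* is the uniform distribution over reward-maximizing outputs, and r(x,·) is non-constant for every x in the support of p_test, then there exists τ ∈ (0,1) such that for all 0 < τ' ≤ τ, the tempered predictor (f_ρ)_{τ'}(·|x) = softmax(f_ρ(·|x); τ') satisfies R((f_ρ)_{τ'}) > R(f_ρ). -/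
open Finset

open scoped Classical in
/-- The set of maximizers of `q`. -/
noncomputable def maxSet {Y : Type} [Fintype Y] (q : Y → ℝ) : Finset Y :=
  Finset.univ.filter (fun y => ∀ y', q y' ≤ q y)

open Filter Topology

section Aux

variable {Y : Type} [Fintype Y] [Nonempty Y]

open scoped Classical in
lemma mem_maxSet {q : Y → ℝ} {y : Y} : y ∈ maxSet q ↔ ∀ y', q y' ≤ q y := by
  simp [maxSet]

lemma maxSet_nonempty (q : Y → ℝ) : (maxSet q).Nonempty := by
  classical
  obtain ⟨b, _, hb⟩ := Finset.exists_max_image Finset.univ q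
    ⟨Classical.arbitrary Y, Finset.mem_univ _⟩
  exact ⟨b, mem_maxSet.mpr fun y' => hb y' (Finset.mem_univ _)⟩

open scoped Classical in
lemma softmax_tendsto (q : Y → ℝ) (y : Y) :
    Tendsto (fun τ => softmax q τ y) (𝓝[>] (0:ℝ))
      (𝓝 ((if y ∈ maxSet q then 1 else 0) / (maxSet q).card)) := by
  classical
  obtain ⟨y₀, hy₀⟩ := maxSet_nonempty q
  have hy₀' : ∀ y', q y' ≤ q y₀ := mem_maxSet.mp hy₀
  have key : ∀ τ : ℝ, ∀ z : Y, softmax q τ z =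
      Real.exp ((q z - q y₀) / τ) / ∑ y', Real.exp ((q y' - q y₀) / τ) := by
    intro τ z
    have e : ∀ w : Y, Real.exp ((q w - q y₀) / τ)
        = Real.exp (q w / τ) * Real.exp (-(q y₀ / τ)) := by
      intro w
      rw [← Real.exp_add, sub_div]
      ring_nf
    simp only [softmax, e, ← Finset.sum_mul]
    rw [mul_div_mul_right _ _ (Real.exp_ne_zero _)]
  simp only [key]
  have hterm : ∀ z : Y, Tendsto (fun τ : ℝ => Real.exp ((q z - q y₀) / τ)) (𝓝[>] (0:ℝ))
      (𝓝 (if z ∈ maxSet q then 1 else 0)) := by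
    intro z
    by_cases hz : z ∈ maxSet q
    · have hqz : q z = q y₀ := le_antisymm (hy₀' z) (mem_maxSet.mp hz y₀)
      simp [hz, hqz]
    · have hne : ¬ ∀ y', q y' ≤ q z := fun h => hz (mem_maxSet.mpr h)
      push_neg at hne
      obtain ⟨w, hw⟩ := hne
      have hlt : q z - q y₀ < 0 := by linarith [hy₀' w]
      have h1 : Tendsto (fun τ : ℝ => (q z - q y₀) / τ) (𝓝[>] (0:ℝ)) atBot := by
        simp only [div_eq_mul_inv]
        exact Tendsto.const_mul_atTop_of_neg hlt tendsto_inv_nhdsGT_zero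
      simp only [hz, if_false]
      exact Real.tendsto_exp_atBot.comp h1
  have hden : Tendsto (fun τ : ℝ => ∑ y', Real.exp ((q y' - q y₀) / τ)) (𝓝[>] (0:ℝ))
      (𝓝 ((maxSet q).card : ℝ)) := by
    have h := tendsto_finset_sum Finset.univ (fun z _ => hterm z)
    have hsum : (∑ z : Y, (if z ∈ maxSet q then (1:ℝ) else 0)) = (maxSet q).card := by
      rw [Finset.sum_ite_mem, Finset.univ_inter, Finset.sum_const, nsmul_eq_mul, mul_one]
    rwa [hsum] at h
  have hcard : ((maxSet q).card : ℝ) ≠ 0 := by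
    have := (maxSet_nonempty q).card_pos
    positivity
  exact (hterm y).div hden hcard

end Aux

open scoped Classical in
/-- Transcendence for a single noisy expert via low temperature: there is a temperature
`τ ∈ (0,1)` such that for all `0 < τ' ≤ τ`, the tempered noisy expert achieves strictly
higher reward than the noisy expert itself. -/
theorem transcendence_single_noisy_expert {X Y : Type}
    [Fintype X] [Nonempty X] [Fintype Y] [Nonempty Y]
    (hY : 2 ≤ Fintype.card Y)
    (r : X → Y → ℝ)
    (ptest : X → ℝ) (hp0 : ∀ x, 0 ≤ ptest x) (hp1 : ∑ x, ptest x = 1)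
    (hr : ∀ x, 0 < ptest x → ∃ y y', r x y ≠ r x y')
    (ρ : ℝ) (hρ : ρ ∈ Set.Ioo (0 : ℝ) 1)
    (fstar : X → Y → ℝ)
    (hfstar : ∀ x y, fstar x y =
      if y ∈ maxSet (fun y' => r x y') then (1 : ℝ) / (maxSet (fun y' => r x y')).card else 0)
    (fρ : X → Y → ℝ)
    (hfρ : ∀ x y, fρ x y = ρ / (Fintype.card Y : ℝ) + (1 - ρ) * fstar x y) :
    ∃ τ : ℝ, τ ∈ Set.Ioo (0 : ℝ) 1 ∧ ∀ τ' : ℝ, 0 < τ' → τ' ≤ τ →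
      reward ptest r (fun x => softmax (fρ x) τ') > reward ptest r fρ := by
  classical
  obtain ⟨hρ0, hρ1⟩ := hρ
  have hn : (0:ℝ) < Fintype.card Y := by positivity
  -- maxSet of fρ x equals maxSet of r x
  have hms : ∀ x, maxSet (fρ x) = maxSet (fun y' => r x y') := by
    intro x
    have hcpos : (0:ℝ) < (maxSet (fun y' => r x y')).card := by
      have := (maxSet_nonempty (fun y' => r x y')).card_pos
      positivity
    have hfs_le : ∀ y, fstar x y ≤ 1 / (maxSet (fun y' => r x y')).card := by
      intro y
      rw [hfstar]
      split
      · exact le_rfl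
      · positivity
    ext y
    rw [mem_maxSet, mem_maxSet]
    constructor
    · intro h
      obtain ⟨y₀, hy₀⟩ := maxSet_nonempty (fun y' => r x y')
      have h1 := h y₀
      rw [hfρ, hfρ] at h1
      have h2 : fstar x y₀ ≤ fstar x y := by nlinarith
      rw [hfstar x y₀, if_pos hy₀] at h2
      by_contra hy
      have hy' : y ∉ maxSet (fun y' => r x y') := fun hm => hy (mem_maxSet.mp hm)
      rw [hfstar x y, if_neg hy'] at h2
      have : (0:ℝ) < 1 / (maxSet (fun y' => r x y')).card := by positivity
      linarith
    · intro hy y'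
      have hmem : y ∈ maxSet (fun y' => r x y') := mem_maxSet.mpr hy
      have h2 : fstar x y' ≤ fstar x y := by
        rw [hfstar x y, if_pos hmem]
        exact hfs_le y'
      rw [hfρ, hfρ]
      nlinarith
  -- per-x expected rewards
  have hSstar : ∀ x, (∑ y, fstar x y * r x y) =
      r x ((maxSet_nonempty (fun y' => r x y')).choose) := by
    intro x
    set s := maxSet (fun y' => r x y') with hs
    set y₀ := (maxSet_nonempty (fun y' => r x y')).choose with hy₀def
    have hy₀ : y₀ ∈ s := (maxSet_nonempty (fun y' => r x y')).choose_spec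
    have hconst : ∀ y ∈ s, r x y = r x y₀ :=
      fun y hy => le_antisymm (mem_maxSet.mp hy₀ y) (mem_maxSet.mp hy y₀)
    have hcpos : (0:ℝ) < s.card := by
      have := (maxSet_nonempty (fun y' => r x y')).card_pos
      positivity
    calc (∑ y, fstar x y * r x y)
        = ∑ y ∈ s, (1 / (s.card : ℝ)) * r x y := by
          rw [← Finset.sum_filter_add_sum_filter_not Finset.univ (fun y => y ∈ s)]
          have h1 : (Finset.univ.filter (fun y => y ∈ s)) = s := by
            ext y; simp
          have h2 : ∀ y ∈ Finset.univ.filter (fun y => y ∉ s), fstar x y * r x y = 0 := by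
            intro y hy
            simp only [Finset.mem_filter] at hy
            rw [hfstar, if_neg hy.2, zero_mul]
          rw [Finset.sum_eq_zero h2, add_zero, h1]
          exact Finset.sum_congr rfl fun y hy => by rw [hfstar, if_pos hy]
      _ = ∑ y ∈ s, (1 / (s.card : ℝ)) * r x y₀ :=
          Finset.sum_congr rfl fun y hy => by rw [hconst y hy]
      _ = r x y₀ := by
          rw [Finset.sum_const, nsmul_eq_mul]
          field_simp
  have hstrict : ∀ x, 0 < ptest x →
      (∑ y, fρ x y * r x y) < (∑ y, fstar x y * r x y) := by
    intro x hx
    set y₀ := (maxSet_nonempty (fun y' => r x y')).choose with hy₀def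
    have hy₀ : y₀ ∈ maxSet (fun y' => r x y') := (maxSet_nonempty (fun y' => r x y')).choose_spec
    have hmax : ∀ y, r x y ≤ r x y₀ := mem_maxSet.mp hy₀
    obtain ⟨a, b, hab⟩ := hr x hx
    have hex : ∃ y, r x y < r x y₀ := by
      by_cases ha : r x a = r x y₀
      · exact ⟨b, lt_of_le_of_ne (hmax b) (fun h => hab (ha.trans h.symm))⟩
      · exact ⟨a, lt_of_le_of_ne (hmax a) ha⟩
    obtain ⟨w, hw⟩ := hex
    have hsumlt : (∑ y, r x y) < (Fintype.card Y : ℝ) * r x y₀ := by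
      have := Finset.sum_lt_sum (f := fun y => r x y) (g := fun _ => r x y₀)
        (fun y _ => hmax y) ⟨w, Finset.mem_univ w, hw⟩
      simpa [Finset.card_univ, mul_comm] using this
    have hsplit : (∑ y, fρ x y * r x y)
        = ρ / (Fintype.card Y : ℝ) * (∑ y, r x y) + (1 - ρ) * (∑ y, fstar x y * r x y) := by
      simp only [hfρ, add_mul, Finset.sum_add_distrib, Finset.mul_sum, mul_assoc]
    rw [hsplit, hSstar x, ← hy₀def]
    have h1 : ρ / (Fintype.card Y : ℝ) * (∑ y, r x y)
        < ρ / (Fintype.card Y : ℝ) * ((Fintype.card Y : ℝ) * r x y₀) := by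
      apply mul_lt_mul_of_pos_left hsumlt
      positivity
    have h2 : ρ / (Fintype.card Y : ℝ) * ((Fintype.card Y : ℝ) * r x y₀) = ρ * r x y₀ := by
      field_simp
    nlinarith
  -- strict global inequality
  have hgt : reward ptest r fρ < reward ptest r fstar := by
    unfold reward
    apply Finset.sum_lt_sum
    · intro x _
      rcases (hp0 x).eq_or_lt with h | h
      · rw [← h]; simp
      · exact mul_le_mul_of_nonneg_left (le_of_lt (hstrict x h)) (hp0 x)
    · have : ∃ x, 0 < ptest x := by
        by_contra h
        push_neg at h
        have : ∀ x ∈ Finset.univ, ptest x = 0 :=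
          fun x _ => le_antisymm (h x) (hp0 x)
        rw [Finset.sum_eq_zero this] at hp1
        norm_num at hp1
      obtain ⟨x, hx⟩ := this
      exact ⟨x, Finset.mem_univ x, mul_lt_mul_of_pos_left (hstrict x hx) hx⟩
  -- convergence of tempered reward to reward of fstar
  have hR : Tendsto (fun τ => reward ptest r (fun x => softmax (fρ x) τ)) (𝓝[>] (0:ℝ))
      (𝓝 (reward ptest r fstar)) := by
    unfold reward
    apply tendsto_finset_sum
    intro x _
    apply Tendsto.const_mul
    apply tendsto_finset_sum
    intro y _
    have h := (softmax_tendsto (fρ x) y).mul_const (r x y)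
    have heq : (if y ∈ maxSet (fρ x) then (1:ℝ) else 0) / (maxSet (fρ x)).card
        = fstar x y := by
      rw [hms, hfstar]
      split <;> simp
    rwa [heq] at h
  have hev : ∀ᶠ τ in 𝓝[>] (0:ℝ),
      reward ptest r fρ < reward ptest r (fun x => softmax (fρ x) τ) :=
    hR.eventually_const_lt hgt
  obtain ⟨u, hu, hsub⟩ := mem_nhdsGT_iff_exists_Ioc_subset.mp hev
  have hu0 : (0:ℝ) < u := hu
  refine ⟨min u (1/2), ⟨by positivity, ?_⟩, ?_⟩
  · calc min u (1/2) ≤ 1/2 := min_le_right _ _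
      _ < 1 := by norm_num
  · intro τ' hτ'0 hτ'le
    have : τ' ∈ Set.Ioc (0:ℝ) u :=
      ⟨hτ'0, le_trans hτ'le (min_le_left _ _)⟩
    exact hsub this
end
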